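/- (Casimir operator on horocyclic-invariant functions.) Let u : M₂(ℝ) → ℂ be a smooth function such that (U₋u)(g) = 0 for all g ∈ SL(2,ℝ). Then for every g ∈ SL(2,ℝ): (X(Xu))(g) + (X⊥(X⊥u))(g) − (V(Vu))(g) = (X(Xu))(g) − (Xu)(g). That is, the Casimir operator Ω = X² + X⊥² − V² acts as X² − X on the kernel of U₋. -/

import Mathlib

open Complex

attribute [local instance] Matrix.normedAddCommGroup Matrix.normedSpace

/-- The space of real 2×2 matrices. -/
abbrev M2 := Matrix (Fin 2) (Fin 2) ℝ

noncomputable def matX : M2 := !![1/2, 0; 0, -(1/2)]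
noncomputable def matXperp : M2 := !![0, 1/2; 1/2, 0]
noncomputable def matV : M2 := !![0, 1/2; -(1/2), 0]
noncomputable def matUminus : M2 := !![0, 0; 1, 0]

/-- The left-invariant derivative `(Yu)(g) = d/dt|₀ u(g·exp(tY))`. -/
noncomputable def lieD (Y : M2) (u : M2 → ℂ) (g : M2) : ℂ :=
  deriv (fun t : ℝ => u (g * NormedSpace.exp (t • Y))) 0

/-- The raising operator `η₊u = (1/2)(Xu + i·X⊥u)`. -/
noncomputable def etaPlus (u : M2 → ℂ) (g : M2) : ℂ :=
  (1 / 2 : ℂ) * (lieD matX u g + Complex.I * lieD matXperp u g)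

/-- The lowering operator `η₋u = (1/2)(Xu − i·X⊥u)`. -/
noncomputable def etaMinus (u : M2 → ℂ) (g : M2) : ℂ :=
  (1 / 2 : ℂ) * (lieD matX u g - Complex.I * lieD matXperp u g)

/-- The `k`-th Fourier mode `u_k(g) = (1/2π)∫₀^{2π} u(g·exp(θV)) e^{−ikθ} dθ`. -/
noncomputable def fMode (u : M2 → ℂ) (k : ℤ) (g : M2) : ℂ :=
  (((2 * Real.pi)⁻¹ : ℝ) : ℂ) *
    ∫ θ in (0 : ℝ)..(2 * Real.pi),
      u (g * NormedSpace.exp (θ • matV)) * Complex.exp (-(k : ℂ) * (θ : ℂ) * Complex.I)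

/-! Since `X⊥ = V + U₋` and `X⊥² = V² + 2 V U₋ − X`, expanding each second-order operator through
the first and second Fréchet derivatives of `u` (the latter symmetric, `u` being `C²`) gives
`Ω u = X² u − X u + 2 V (U₋ u) + U₋ (U₋ u)`. The last two terms vanish on `SL(2,ℝ)`: `U₋ u` vanishes
there, and `V`, `U₋` are traceless, so the curves `t ↦ g exp(tV)`, `t ↦ g exp(tU₋)` stay in
`SL(2,ℝ)`. -/

open Matrix

/- `NormedSpace.exp` is differentiated in the operator-norm algebra structure; `HasDerivAt` only
sees the topology, which all norms on `M2` share. -/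
lemma hasDerivAt_mul_exp_smul (g Y : M2) (t : ℝ) :
    HasDerivAt (fun s : ℝ => g * NormedSpace.exp (s • Y))
      (g * NormedSpace.exp (t • Y) * Y) t := by
  let := Matrix.linftyOpNormedRing (n := Fin 2) (α := ℝ)
  let := Matrix.linftyOpNormedAlgebra (R := ℝ) (n := Fin 2) (α := ℝ)
  let : NormedAddCommGroup M2 := NonUnitalNormedRing.toNormedAddCommGroup
  let : NormedSpace ℝ M2 := NormedAlgebra.toNormedSpace M2
  have : CompleteSpace M2 := FiniteDimensional.complete ℝ M2
  have h := (hasDerivAt_exp_smul_const (𝕂 := ℝ) Y t).const_mul g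
  rwa [← mul_assoc] at h

lemma hasDerivAt_det_mul_exp_smul (g Y : M2) (t : ℝ) :
    HasDerivAt (fun s : ℝ => (g * NormedSpace.exp (s • Y)).det)
      ((g * NormedSpace.exp (t • Y)).det * Y.trace) t := by
  have hentry (i j : Fin 2) : HasDerivAt (fun s : ℝ => (g * NormedSpace.exp (s • Y)) i j)
      ((g * NormedSpace.exp (t • Y) * Y) i j) t :=
    hasDerivAt_pi.1 (hasDerivAt_pi.1 (hasDerivAt_mul_exp_smul g Y t) i) j
  simp only [det_fin_two]
  refine (((hentry 0 0).fun_mul (hentry 1 1)).fun_sub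
    ((hentry 0 1).fun_mul (hentry 1 0))).congr_deriv ?_
  simp only [trace_fin_two, mul_apply, Fin.sum_univ_two]
  ring

lemma det_mul_exp_smul_of_trace_eq_zero (g Y : M2) (hY : Y.trace = 0) (t : ℝ) :
    (g * NormedSpace.exp (t • Y)).det = g.det := by
  have hderiv := hasDerivAt_det_mul_exp_smul g Y
  have hconst := is_const_of_deriv_eq_zero (fun s => (hderiv s).differentiableAt)
    (fun s => by rw [(hderiv s).deriv, hY, mul_zero]) t 0
  simpa [NormedSpace.exp_zero] using hconst

lemma lieD_eq_zero_of_eq_zero_on_det_eq_one {w : M2 → ℂ} (hw : ∀ x : M2, x.det = 1 → w x = 0)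
    {Y : M2} (hY : Y.trace = 0) {g : M2} (hg : g.det = 1) : lieD Y w g = 0 := by
  have hcurve : (fun t : ℝ => w (g * NormedSpace.exp (t • Y))) = fun _ => 0 :=
    funext fun t => hw _ (by rw [det_mul_exp_smul_of_trace_eq_zero g Y hY t, hg])
  rw [lieD, hcurve, deriv_const]

lemma HasFDerivAt.lieD_eq {u : M2 → ℂ} {u' : M2 →L[ℝ] ℂ} {g : M2} (hu : HasFDerivAt u u' g)
    (Y : M2) : lieD Y u g = u' (g * Y) := by
  have hcurve := hasDerivAt_mul_exp_smul g Y 0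
  simp only [zero_smul, NormedSpace.exp_zero, mul_one] at hcurve
  exact (hu.comp_hasDerivAt_of_eq 0 hcurve (by simp)).deriv

lemma lieD_lieD {u : M2 → ℂ} (hu : ContDiff ℝ 2 u) (Y Z g : M2) :
    lieD Y (lieD Z u) g
      = fderiv ℝ (fderiv ℝ u) g (g * Y) (g * Z) + fderiv ℝ u g (g * (Y * Z)) := by
  have hdu : Differentiable ℝ (fderiv ℝ u) :=
    (hu.fderiv_right (m := 1) (by norm_num)).differentiable (by norm_num)
  have hZ : lieD Z u = fun x => fderiv ℝ u x (x * Z) :=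
    funext fun x => (hu.differentiable (by norm_num) x).hasFDerivAt.lieD_eq Z
  let mulZ : M2 →L[ℝ] M2 := (LinearMap.mulRight ℝ Z).toContinuousLinearMap
  rw [hZ]
  convert ((hdu g).hasFDerivAt.clm_apply mulZ.hasFDerivAt).lieD_eq Y using 1
  · rfl -- the two sides differ only in instance paths
  · change _ = fderiv ℝ u g (g * Y * Z) + fderiv ℝ (fderiv ℝ u) g (g * Y) (g * Z)
    rw [mul_assoc, add_comm]

lemma trace_matV : matV.trace = 0 := by
  simp [matV, trace_fin_two]

lemma trace_matUminus : matUminus.trace = 0 := by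
  simp [matUminus, trace_fin_two]

lemma matXperp_eq_matV_add_matUminus : matXperp = matV + matUminus := by
  ext i j
  fin_cases i <;> fin_cases j <;> norm_num [matXperp, matV, matUminus]

lemma matXperp_mul_self : matXperp * matXperp = matV * matV + 2 • (matV * matUminus) - matX := by
  ext i j
  fin_cases i <;> fin_cases j <;> norm_num [matXperp, matV, matUminus, matX, mul_fin_two]

lemma matUminus_mul_self : matUminus * matUminus = 0 := by
  ext i j
  fin_cases i <;> fin_cases j <;> simp [matUminus]

theorem casimir_on_ker_Uminus (u : M2 → ℂ)
    (hu : ContDiff ℝ (⊤ : ℕ∞) u)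
    (hU : ∀ g : M2, g.det = 1 → lieD matUminus u g = 0) :
    ∀ g : M2, g.det = 1 →
      lieD matX (lieD matX u) g + lieD matXperp (lieD matXperp u) g
          - lieD matV (lieD matV u) g
        = lieD matX (lieD matX u) g - lieD matX u g := by
  intro g hg
  have hu2 : ContDiff ℝ 2 u := hu.of_le (by norm_cast)
  have hsymm : fderiv ℝ (fderiv ℝ u) g (g * matV) (g * matUminus)
      = fderiv ℝ (fderiv ℝ u) g (g * matUminus) (g * matV) :=
    (hu2.contDiffAt.isSymmSndFDerivAt (by simp)).eq _ _
  have hVU := lieD_eq_zero_of_eq_zero_on_det_eq_one hU trace_matV hg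
  have hUU := lieD_eq_zero_of_eq_zero_on_det_eq_one hU trace_matUminus hg
  rw [lieD_lieD hu2] at hVU hUU
  rw [matUminus_mul_self, mul_zero, map_zero, add_zero] at hUU
  have hX : lieD matX u g = fderiv ℝ u g (g * matX) :=
    (hu2.differentiable (by norm_num) g).hasFDerivAt.lieD_eq matX
  rw [lieD_lieD hu2 matXperp, lieD_lieD hu2 matV, hX,
    matXperp_mul_self, matXperp_eq_matV_add_matUminus]
  simp only [mul_add, mul_sub, mul_smul_comm, map_add, map_sub, map_nsmul,
    _root_.add_apply]
  linear_combination 2 * hVU + hUU - hsymm
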